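/- Let p, q ∈ (1,∞), k > −1, ℓ > 1−p, and x ∈ [0, π_{p,q}/2]. Then ∫₀^x sin_{p,q}^k(t) · cos_{p,q}^ℓ(t) dt = (1/(k+1)) · sin_{p,q}^{k+1}(x) · ∑_{n=0}^∞ [((k+1)/q)_n · ((1−ℓ)/p)_n / (1+(k+1)/q)_n] · sin_{p,q}^{qn}(x)/n!, where the series is the Gaussian hypergeometric series F((k+1)/q, (1−ℓ)/p; 1+(k+1)/q; sin_{p,q}^q(x)) (which converges for all such x since the third parameter exceeds the sum of the first two). -/

import Mathlib

open Set MeasureTheory Filter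

/-- Generalized arcsine: `arcsin_{p,q}(x) = ∫₀ˣ (1 - tᵠ)^(-1/p) dt`. -/
noncomputable def gArcsin (p q x : ℝ) : ℝ := ∫ t in (0:ℝ)..x, (1 - t ^ q) ^ (-(1 / p))

/-- Generalized pi: `π_{p,q} = 2 ∫₀¹ (1 - tᵠ)^(-1/p) dt`. -/
noncomputable def gPi (p q : ℝ) : ℝ := 2 * gArcsin p q 1

/-- `S` is the generalized sine `sin_{p,q}` (the inverse of `gArcsin p q` on `[0,1]`). -/
def IsGSin (p q : ℝ) (S : ℝ → ℝ) : Prop :=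
  ∀ y ∈ Icc (0:ℝ) 1, S (gArcsin p q y) = y

/-- `C` is the generalized cosine `cos_{p,q}`, the derivative of `S = sin_{p,q}`
on `[0, π_{p,q}/2]`. -/
def IsGCos (p q : ℝ) (S C : ℝ → ℝ) : Prop :=
  ∀ x ∈ Icc (0:ℝ) (gPi p q / 2), HasDerivWithinAt S (C x) (Icc (0:ℝ) (gPi p q / 2)) x

/-!
Substituting `t = arcsin_{p,q} s` turns the integral into `∫₀^y s^k (1 - s^q)^((ℓ-1)/p) ds` with
`y = sin_{p,q} x`, since `cos_{p,q} (arcsin_{p,q} s) = (1 - s^q)^(1/p)` by the inverse function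
rule. Expanding `(1 - s^q)^(-a)`, `a = (1-ℓ)/p < 1`, in the binomial series and integrating termwise
gives `∑ (a)_n / n! · y^(k+1+qn) / (k+1+qn)`, and `(b)_n / (1+b)_n = b / (b+n)` with
`b = (k+1)/q` rewrites this as the hypergeometric series. Termwise integration is justified up to
`y = 1` because `|(a)_n| / n! = O(n^(a-1))`, so that `∑ |(a)_n| / (n! (n+1))` converges.
-/

open Asymptotics

theorem ascPochhammer_eval_div_eval_one_add {b : ℝ} (hb : 0 < b) (n : ℕ) :
    (ascPochhammer ℝ n).eval b / (ascPochhammer ℝ n).eval (1 + b) = b / (b + n) := by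
  have := ascPochhammer_pos n _ (by linarith : 0 < 1 + b)
  rw [div_eq_div_iff this.ne' (by positivity), ← ascPochhammer_succ_eval, ascPochhammer_succ_left]
  simp [add_comm]

theorem ascPochhammer_eval_div_factorial_eq_choose (a : ℝ) (n : ℕ) :
    (ascPochhammer ℝ n).eval a / n.factorial = Ring.choose (a + n - 1) n := by
  rw [← Ring.multichoose_eq, ← Polynomial.ascPochhammer_smeval_eq_eval,
    ← Ring.factorial_nsmul_multichoose_eq_ascPochhammer, nsmul_eq_mul]
  field_simp

theorem hasSum_ascPochhammer_div_factorial_mul_pow (a : ℝ) {v : ℝ} (hv : |v| < 1) :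
    HasSum (fun n : ℕ => (ascPochhammer ℝ n).eval a / n.factorial * v ^ n)
      ((1 - v) ^ (-a)) := by
  have h := (Real.one_div_one_sub_rpow_hasFPowerSeriesOnBall_zero a).hasSum
    (y := v) (by simpa [enorm_eq_nnnorm, ← NNReal.coe_lt_one] using hv)
  simp only [FormalMultilinearSeries.ofScalars_apply_eq, smul_eq_mul, zero_add] at h
  rw [Real.rpow_neg (by linarith [le_abs_self v]), ← one_div]
  simpa only [ascPochhammer_eval_div_factorial_eq_choose] using h

theorem one_sub_div_le_div_add_one_rpow {r x : ℝ} (hr : 0 ≤ r) (hx : 0 < x) :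
    1 - r / x ≤ (x / (x + 1)) ^ r := by
  have h1 : (x + 1) / x ≤ Real.exp (1 / x) := by
    linarith [Real.add_one_le_exp (1 / x), show (x + 1) / x = 1 / x + 1 by field_simp; ring]
  calc 1 - r / x ≤ Real.exp (-(r / x)) := by linarith [Real.add_one_le_exp (-(r / x))]
    _ = (Real.exp (1 / x) ^ r)⁻¹ := by rw [← Real.exp_mul, Real.exp_neg]; ring_nf
    _ ≤ (((x + 1) / x) ^ r)⁻¹ := inv_anti₀ (by positivity) (by gcongr)
    _ = (x / (x + 1)) ^ r := by rw [← Real.inv_rpow (by positivity), inv_div]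

theorem isBigO_ascPochhammer_div_factorial {a : ℝ} (ha : a ≤ 1) :
    (fun n : ℕ => (ascPochhammer ℝ n).eval a / n.factorial) =O[atTop]
      fun n => ((n : ℝ) + 1) ^ (a - 1) := by
  set c : ℕ → ℝ := fun n => |(ascPochhammer ℝ n).eval a| / n.factorial
  set w : ℕ → ℝ := fun n => c n * ((n : ℝ) + 1) ^ (1 - a)
  -- once `a + n ≥ 0`, `c (n+1) / c n = 1 - (1-a)/(n+1) ≤ ((n+1)/(n+2))^(1-a)`, so `w` decreases
  have hw_step : ∀ n : ℕ, -a ≤ n → w (n + 1) ≤ w n := by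
    intro n hn
    have hc : c (n + 1) = c n * (1 - (1 - a) / (n + 1)) := by
      simp only [c, ascPochhammer_succ_eval, Nat.factorial_succ, abs_mul,
        abs_of_nonneg (show 0 ≤ a + n by linarith)]
      push_cast
      field_simp
      ring
    calc w (n + 1) = c n * (1 - (1 - a) / (n + 1)) * ((n : ℝ) + 1 + 1) ^ (1 - a) := by
          simp only [w, hc]; push_cast; ring_nf
      _ ≤ c n * (((n : ℝ) + 1) / (n + 1 + 1)) ^ (1 - a) * ((n : ℝ) + 1 + 1) ^ (1 - a) := by
          gcongr
          exact one_sub_div_le_div_add_one_rpow (by linarith) (by positivity)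
      _ = w n := by
          rw [mul_assoc, ← Real.mul_rpow (by positivity) (by positivity),
            div_mul_cancel₀ _ (by positivity)]
  set N := ⌈-a⌉₊
  have hw_le : ∀ n, N ≤ n → w n ≤ w N := by
    intro n hn
    induction n, hn using Nat.le_induction with
    | base => rfl
    | succ n hn ih => exact (hw_step n ((Nat.le_ceil _).trans (by exact_mod_cast hn))).trans ih
  refine IsBigO.of_bound (w N) (eventually_atTop.2 ⟨N, fun n hn => ?_⟩)
  have hpos : (0 : ℝ) < (n : ℝ) + 1 := by positivity
  calc ‖(ascPochhammer ℝ n).eval a / n.factorial‖ = w n * ((n : ℝ) + 1) ^ (a - 1) := by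
        rw [mul_assoc, ← Real.rpow_add hpos, sub_add_sub_cancel', sub_self, Real.rpow_zero,
          mul_one, Real.norm_eq_abs, abs_div, Nat.abs_cast]
    _ ≤ w N * ‖((n : ℝ) + 1) ^ (a - 1)‖ := by
        rw [Real.norm_of_nonneg (by positivity)]
        exact mul_le_mul_of_nonneg_right (hw_le n hn) (by positivity)

theorem summable_abs_ascPochhammer_div_factorial_div_add_one {a : ℝ} (ha : a < 1) :
    Summable fun n : ℕ => |(ascPochhammer ℝ n).eval a| / n.factorial / ((n : ℝ) + 1) := by
  have hsum : Summable fun n : ℕ => ((n : ℝ) + 1) ^ (a - 2) := by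
    simpa using (summable_nat_add_iff 1).2 (Real.summable_nat_rpow.2 (by linarith : a - 2 < -1))
  refine summable_of_isBigO_nat hsum ?_
  have h := ((isBigO_ascPochhammer_div_factorial ha.le).norm_left).mul
    (isBigO_refl (fun n : ℕ => ((n : ℝ) + 1)⁻¹) atTop)
  refine (h.congr (fun n => ?_) (fun n => ?_))
  · simp [div_eq_mul_inv]
  · rw [← Real.rpow_neg_one, ← Real.rpow_add (by positivity)]; ring_nf

theorem summable_abs_ascPochhammer_div_factorial_div_add_mul {a b q : ℝ} (ha : a < 1)
    (hb : 0 < b) (hq : 0 < q) :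
    Summable fun n : ℕ => |(ascPochhammer ℝ n).eval a| / n.factorial / (b + q * n) := by
  set m := min b q
  have hm : 0 < m := lt_min hb hq
  refine ((summable_abs_ascPochhammer_div_factorial_div_add_one ha).div_const m).of_nonneg_of_le
    (fun n => by positivity) (fun n => ?_)
  have hden : m * ((n : ℝ) + 1) ≤ b + q * n := by
    nlinarith [min_le_left b q, min_le_right b q, (n.cast_nonneg : (0 : ℝ) ≤ n)]
  rw [div_div _ _ m, mul_comm _ m]
  gcongr

theorem integrableOn_Ioo_rpow {e y : ℝ} (he : -1 < e) (hy : 0 ≤ y) :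
    IntegrableOn (fun s : ℝ => s ^ e) (Ioo 0 y) := by
  have h := intervalIntegral.intervalIntegrable_rpow' (a := 0) (b := y) he
  rw [intervalIntegrable_iff_integrableOn_Ioc_of_le hy] at h
  exact h.mono_set Ioo_subset_Ioc_self

theorem integral_Ioo_rpow {e y : ℝ} (he : -1 < e) (hy : 0 ≤ y) :
    ∫ s in Ioo 0 y, s ^ e = y ^ (e + 1) / (e + 1) := by
  rw [← integral_Ioc_eq_integral_Ioo, ← intervalIntegral.integral_of_le hy,
    integral_rpow (Or.inl he), Real.zero_rpow (by linarith), sub_zero]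

theorem hasSum_rpow_mul_one_sub_rpow_neg (a k : ℝ) {q s : ℝ} (hq : 0 < q)
    (hs : s ∈ Ioo (0 : ℝ) 1) :
    HasSum (fun n : ℕ => (ascPochhammer ℝ n).eval a / n.factorial * s ^ (k + q * n))
      (s ^ k * (1 - s ^ q) ^ (-a)) := by
  have hsq : |s ^ q| < 1 := by
    rw [abs_of_nonneg (Real.rpow_nonneg hs.1.le q)]
    exact Real.rpow_lt_one hs.1.le hs.2 hq
  refine ((hasSum_ascPochhammer_div_factorial_mul_pow a hsq).mul_left (s ^ k)).congr_fun
    fun n => ?_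
  rw [Real.rpow_add hs.1, Real.rpow_mul hs.1.le, Real.rpow_natCast]
  ring

theorem integral_rpow_mul_one_sub_rpow_eq_tsum {a k q y : ℝ} (ha : a < 1) (hk : -1 < k)
    (hq : 0 < q) (hy0 : 0 ≤ y) (hy1 : y ≤ 1) :
    ∫ s in Ioo 0 y, s ^ k * (1 - s ^ q) ^ (-a) =
      ∑' n : ℕ, (ascPochhammer ℝ n).eval a / n.factorial *
        (y ^ (k + 1 + q * n) / (k + 1 + q * n)) := by
  set c : ℕ → ℝ := fun n => (ascPochhammer ℝ n).eval a / n.factorial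
  have he : ∀ n : ℕ, -1 < k + q * n := fun n => by
    have : 0 ≤ q * n := by positivity
    linarith
  have hK : ∀ n : ℕ, 0 < k + 1 + q * n := fun n => by linarith [he n]
  have hexp : ∀ n : ℕ, k + q * n + 1 = k + 1 + q * n := fun n => by ring
  have hF_int : ∀ n : ℕ, IntegrableOn (fun s : ℝ => c n * s ^ (k + q * n)) (Ioo 0 y) :=
    fun n => (integrableOn_Ioo_rpow (he n) hy0).const_mul _
  have hF_norm : ∀ n : ℕ, ∫ s in Ioo 0 y, ‖c n * s ^ (k + q * n)‖ =
      |c n| * (y ^ (k + 1 + q * n) / (k + 1 + q * n)) := fun n => by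
    rw [setIntegral_congr_fun measurableSet_Ioo (g := fun s => |c n| * s ^ (k + q * n))
      (fun s hs => by simp [abs_of_pos (Real.rpow_pos_of_pos hs.1 _)]),
      integral_const_mul, integral_Ioo_rpow (he n) hy0, hexp]
  have hF_sum : Summable fun n : ℕ => ∫ s in Ioo 0 y, ‖c n * s ^ (k + q * n)‖ := by
    refine (summable_abs_ascPochhammer_div_factorial_div_add_mul (b := k + 1) ha (by linarith)
      hq).of_nonneg_of_le (fun n => integral_nonneg fun _ => norm_nonneg _) (fun n => ?_)
    have hyE : y ^ (k + 1 + q * n) ≤ 1 := Real.rpow_le_one hy0 hy1 (hK n).le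
    calc ∫ s in Ioo 0 y, ‖c n * s ^ (k + q * n)‖
        = |c n| * (y ^ (k + 1 + q * n) / (k + 1 + q * n)) := hF_norm n
      _ ≤ |c n| * (1 / (k + 1 + q * n)) := by have := hK n; gcongr
      _ = |(ascPochhammer ℝ n).eval a| / n.factorial / (k + 1 + q * n) := by
          simp only [c, abs_div, Nat.abs_cast]; ring
  calc ∫ s in Ioo 0 y, s ^ k * (1 - s ^ q) ^ (-a)
      = ∫ s in Ioo 0 y, ∑' n : ℕ, c n * s ^ (k + q * n) :=
        setIntegral_congr_fun measurableSet_Ioo fun s hs =>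
          ((hasSum_rpow_mul_one_sub_rpow_neg a k hq ⟨hs.1, hs.2.trans_le hy1⟩).tsum_eq).symm
    _ = ∑' n : ℕ, ∫ s in Ioo 0 y, c n * s ^ (k + q * n) :=
        (integral_tsum_of_summable_integral_norm hF_int hF_sum).symm
    _ = _ := by
        congr 1 with n
        rw [integral_const_mul, integral_Ioo_rpow (he n) hy0, hexp]

section GeneralizedTrigonometry

variable {p q : ℝ}

theorem intervalIntegrable_gArcsin_integrand (hp : 1 < p) (hq : 1 ≤ q) {y z : ℝ}
    (hy : y ∈ Icc (0 : ℝ) 1) (hz : z ∈ Icc (0 : ℝ) 1) :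
    IntervalIntegrable (fun t : ℝ => (1 - t ^ q) ^ (-(1 / p))) volume y z := by
  have hp' : -1 < -(1 / p) := by
    rw [neg_lt_neg_iff, div_lt_one (by linarith)]; exact hp
  have hdom : IntervalIntegrable (fun t : ℝ => (1 - t) ^ (-(1 / p))) volume 0 1 := by
    simpa using ((intervalIntegral.intervalIntegrable_rpow' (a := 0) (b := 1) hp').comp_sub_left
      1).symm
  have h01 : IntervalIntegrable (fun t : ℝ => (1 - t ^ q) ^ (-(1 / p))) volume 0 1 := by
    refine hdom.mono_fun (Measurable.aestronglyMeasurable (by measurability)) ?_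
    rw [uIoc_of_le zero_le_one]
    filter_upwards [ae_restrict_mem measurableSet_Ioc] with t ⟨ht0, ht1⟩
    have htq : t ^ q ≤ t := by
      simpa using Real.rpow_le_rpow_of_exponent_ge ht0 ht1 hq
    have htq1 : t ^ q ≤ 1 := Real.rpow_le_one ht0.le ht1 (by linarith)
    rw [Real.norm_of_nonneg (Real.rpow_nonneg (by linarith) _),
      Real.norm_of_nonneg (Real.rpow_nonneg (by linarith) _)]
    rcases ht1.eq_or_lt with rfl | ht1
    · simp
    · exact Real.rpow_le_rpow_of_nonpos (by linarith) (by linarith)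
        (by rw [neg_nonpos]; positivity)
  exact h01.mono_set (uIcc_subset_uIcc (by rwa [uIcc_of_le zero_le_one])
    (by rwa [uIcc_of_le zero_le_one]))

@[simp]
theorem gArcsin_zero : gArcsin p q 0 = 0 := intervalIntegral.integral_same

theorem half_gPi : gPi p q / 2 = gArcsin p q 1 := by rw [gPi]; ring

theorem gArcsin_strictMonoOn (hp : 1 < p) (hq : 1 ≤ q) :
    StrictMonoOn (gArcsin p q) (Icc 0 1) := by
  intro y hy z hz hyz
  have hpos : 0 < ∫ t in y..z, (1 - t ^ q) ^ (-(1 / p)) := by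
    refine intervalIntegral.intervalIntegral_pos_of_pos_on
      (intervalIntegrable_gArcsin_integrand hp hq hy hz) (fun t ht => ?_) hyz
    have : t ^ q < 1 := Real.rpow_lt_one (hy.1.trans ht.1.le) (ht.2.trans_le hz.2) (by linarith)
    exact Real.rpow_pos_of_pos (by linarith) _
  rw [gArcsin, gArcsin, ← intervalIntegral.integral_add_adjacent_intervals
    (intervalIntegrable_gArcsin_integrand hp hq ⟨le_rfl, zero_le_one⟩ hy)
    (intervalIntegrable_gArcsin_integrand hp hq hy hz)]
  linarith

theorem gArcsin_continuousOn (hp : 1 < p) (hq : 1 ≤ q) :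
    ContinuousOn (gArcsin p q) (Icc 0 1) := by
  have h := intervalIntegral.continuousOn_primitive_interval (μ := volume) (a := 0) (b := 1)
    (f := fun t : ℝ => (1 - t ^ q) ^ (-(1 / p))) (by
      rw [uIcc_of_le zero_le_one, ← intervalIntegrable_iff_integrableOn_Icc_of_le zero_le_one]
      exact intervalIntegrable_gArcsin_integrand hp hq ⟨le_rfl, zero_le_one⟩
        ⟨zero_le_one, le_rfl⟩)
  rwa [uIcc_of_le zero_le_one] at h

theorem hasDerivAt_gArcsin (hp : 1 < p) (hq : 1 ≤ q) {y : ℝ} (hy : y ∈ Ico (0 : ℝ) 1) :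
    HasDerivAt (gArcsin p q) ((1 - y ^ q) ^ (-(1 / p))) y := by
  have hyq : y ^ q < 1 := Real.rpow_lt_one hy.1 hy.2 (by linarith)
  refine intervalIntegral.integral_hasDerivAt_right
    (intervalIntegrable_gArcsin_integrand hp hq ⟨le_rfl, zero_le_one⟩ ⟨hy.1, hy.2.le⟩)
    (Measurable.stronglyMeasurable (by measurability)).stronglyMeasurableAtFilter ?_
  have hc : ContinuousAt (fun t : ℝ => 1 - t ^ q) y :=
    continuousAt_const.sub (Real.continuousAt_rpow_const y q (Or.inr (by linarith)))
  exact hc.rpow_const (Or.inl (sub_pos.2 hyq).ne')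

theorem gArcsin_mapsTo (hp : 1 < p) (hq : 1 ≤ q) :
    MapsTo (gArcsin p q) (Icc 0 1) (Icc 0 (gPi p q / 2)) := by
  intro y hy
  rw [half_gPi, ← gArcsin_zero (p := p) (q := q)]
  exact ⟨(gArcsin_strictMonoOn hp hq).monotoneOn ⟨le_rfl, zero_le_one⟩ hy hy.1,
    (gArcsin_strictMonoOn hp hq).monotoneOn hy ⟨zero_le_one, le_rfl⟩ hy.2⟩

theorem gArcsin_surjOn (hp : 1 < p) (hq : 1 ≤ q) :
    SurjOn (gArcsin p q) (Icc 0 1) (Icc 0 (gPi p q / 2)) := by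
  intro z hz
  refine intermediate_value_Icc zero_le_one (gArcsin_continuousOn hp hq) ?_
  rwa [gArcsin_zero, ← half_gPi]

theorem gArcsin_image_Ioo (hp : 1 < p) (hq : 1 ≤ q) {y : ℝ} (hy : y ∈ Icc (0 : ℝ) 1) :
    gArcsin p q '' Ioo 0 y = Ioo 0 (gArcsin p q y) := by
  have hsub : Icc 0 y ⊆ Icc 0 1 := Icc_subset_Icc_right hy.2
  simpa using ((gArcsin_continuousOn hp hq).mono hsub).image_Ioo_of_strictMonoOn hy.1
    ((gArcsin_strictMonoOn hp hq).mono hsub)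

-- Differentiate `sin_{p,q} ∘ arcsin_{p,q} = id` on `[0, 1]`, where derivatives are unique.
theorem IsGCos.apply_gArcsin (hp : 1 < p) (hq : 1 ≤ q) {S C : ℝ → ℝ} (hS : IsGSin p q S)
    (hC : IsGCos p q S C) {y : ℝ} (hy : y ∈ Ico (0 : ℝ) 1) :
    C (gArcsin p q y) = (1 - y ^ q) ^ (1 / p) := by
  have hy' : y ∈ Icc (0 : ℝ) 1 := Ico_subset_Icc_self hy
  have hid : HasDerivWithinAt id (C (gArcsin p q y) * (1 - y ^ q) ^ (-(1 / p))) (Icc 0 1) y :=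
    ((hC _ (gArcsin_mapsTo hp hq hy')).comp y (hasDerivAt_gArcsin hp hq hy).hasDerivWithinAt
      (gArcsin_mapsTo hp hq)).congr (fun z hz => (hS z hz).symm) (hS y hy').symm
  have hone := (uniqueDiffOn_Icc zero_lt_one y hy').eq_deriv _ hid (hasDerivWithinAt_id y _)
  have hbase : 0 < 1 - y ^ q := by linarith [Real.rpow_lt_one hy.1 hy.2 (by linarith : 0 < q)]
  rw [Real.rpow_neg hbase.le] at hone
  rw [← mul_inv_eq_one₀ (by positivity), hone]

theorem integral_gSin_rpow_mul_gCos_rpow (hp : 1 < p) (hq : 1 ≤ q) {S C : ℝ → ℝ}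
    (hS : IsGSin p q S) (hC : IsGCos p q S C) (k l : ℝ) {y : ℝ} (hy : y ∈ Icc (0 : ℝ) 1) :
    ∫ t in (0 : ℝ)..gArcsin p q y, S t ^ k * C t ^ l =
      ∫ s in Ioo 0 y, s ^ k * (1 - s ^ q) ^ ((l - 1) / p) := by
  have hIoo : Ioo 0 y ⊆ Ico 0 1 := fun s hs => ⟨hs.1.le, hs.2.trans_le hy.2⟩
  rw [intervalIntegral.integral_of_le (gArcsin_mapsTo hp hq hy).1, integral_Ioc_eq_integral_Ioo,
    ← gArcsin_image_Ioo hp hq hy, integral_image_eq_integral_abs_deriv_smul measurableSet_Ioo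
      (fun s hs => (hasDerivAt_gArcsin hp hq (hIoo hs)).hasDerivWithinAt)
      ((gArcsin_strictMonoOn hp hq).injOn.mono (hIoo.trans Ico_subset_Icc_self))]
  refine setIntegral_congr_fun measurableSet_Ioo fun s hs => ?_
  have hb : 0 < 1 - s ^ q := sub_pos.2 (Real.rpow_lt_one hs.1.le (hIoo hs).2 (by linarith))
  rw [hS s (Ico_subset_Icc_self (hIoo hs)), hC.apply_gArcsin hp hq hS (hIoo hs), smul_eq_mul,
    abs_of_pos (Real.rpow_pos_of_pos hb _), ← Real.rpow_mul hb.le, mul_left_comm,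
    ← Real.rpow_add hb]
  ring_nf

end GeneralizedTrigonometry

/-- Theorem 3.1, formula (3.1): for `k > -1`, `ℓ > 1-p` and `x ∈ [0, π_{p,q}/2]`,
`∫₀ˣ sin_{p,q}ᵏ t · cos_{p,q}^ℓ t dt
  = (1/(k+1)) sin_{p,q}^{k+1} x · F((k+1)/q, (1-ℓ)/p; 1+(k+1)/q; sin_{p,q}^q x)`,
with the hypergeometric series written out as a sum. -/
theorem stmt_3 (p q k l x : ℝ) (hp : 1 < p) (hq : 1 < q)
    (hk : -1 < k) (hl : 1 - p < l)
    (S C : ℝ → ℝ) (hS : IsGSin p q S) (hC : IsGCos p q S C)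
    (hx : x ∈ Icc (0:ℝ) (gPi p q / 2)) :
    ∫ t in (0:ℝ)..x, S t ^ k * C t ^ l =
      (1 / (k + 1)) * S x ^ (k + 1) *
        ∑' n : ℕ,
          ((ascPochhammer ℝ n).eval ((k + 1) / q) * (ascPochhammer ℝ n).eval ((1 - l) / p) /
              (ascPochhammer ℝ n).eval (1 + (k + 1) / q)) *
            S x ^ (q * (n : ℝ)) / (Nat.factorial n : ℝ) := by
  obtain ⟨y, hy, rfl⟩ := gArcsin_surjOn hp hq.le hx
  have ha : (1 - l) / p < 1 := by rw [div_lt_one (by linarith)]; linarith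
  rw [hS y hy, integral_gSin_rpow_mul_gCos_rpow hp hq.le hS hC k l hy,
    show (l - 1) / p = -((1 - l) / p) by ring,
    integral_rpow_mul_one_sub_rpow_eq_tsum ha hk (by linarith) hy.1 hy.2, ← tsum_mul_left]
  congr 1 with n
  have hk1 : 0 < k + 1 := by linarith
  have hq0 : 0 < q := by linarith
  have hK : 0 < k + 1 + q * n := by positivity
  have hratio : (k + 1) / q / ((k + 1) / q + n) = (k + 1) / (k + 1 + q * n) := by
    field_simp
  rw [mul_div_right_comm (Polynomial.eval ((k + 1) / q) _),
    ascPochhammer_eval_div_eval_one_add (div_pos hk1 hq0), hratio, Real.rpow_add' hy.1 hK.ne']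
  field_simp
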